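/- arXiv:2602.08738 — 2 statements merged into one kernel-verified Lean document; each statement's English description precedes it below -/
import Mathlib

section
/- Let t be a positive integer. If a finite simple graph G admits a t-oddomorphism, then the treewidth of G is at least t − 1. -/
open SimpleGraph

/-- `G` contains `H` as an immersion: an injective map `φ : V(H) → V(G)` together with a
family of pairwise edge-disjoint paths in `G`, one path with endpoints `φ u` and `φ v`
for each edge `uv` of `H`. -/
def ContainsImmersion {V W : Type*} (G : SimpleGraph V) (H : SimpleGraph W) : Prop :=
  ∃ φ : W ↪ V, ∃ P : ∀ u v : W, H.Adj u v → G.Walk (φ u) (φ v),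
    (∀ u v (h : H.Adj u v), (P u v h).IsPath) ∧
    (∀ u v (h : H.Adj u v) u' v' (h' : H.Adj u' v'),
      s(u, v) ≠ s(u', v') → ∀ e ∈ (P u v h).edges, e ∉ (P u' v' h').edges)

/-- A vertex `u` is `f`-odd: for every colour `c ≠ f u`, the number of neighbours of `u`
coloured `c` is odd. -/
def FOdd {V : Type*} {n : ℕ} (G : SimpleGraph V) (f : V → Fin n) (u : V) : Prop :=
  ∀ c : Fin n, c ≠ f u → Odd (Nat.card {w : V // G.Adj u w ∧ f w = c})

/-- A vertex `u` is `f`-even: for every colour `c ≠ f u`, the number of neighbours of `u`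
coloured `c` is even. -/
def FEven {V : Type*} {n : ℕ} (G : SimpleGraph V) (f : V → Fin n) (u : V) : Prop :=
  ∀ c : Fin n, c ≠ f u → Even (Nat.card {w : V // G.Adj u w ∧ f w = c})

/-- `f` is an `n`-oddomorphism of `G`: a proper `n`-colouring such that every vertex is
`f`-odd or `f`-even, and every colour class contains an odd number of `f`-odd vertices. -/
def IsOddomorphism {V : Type*} (G : SimpleGraph V) (n : ℕ) (f : V → Fin n) : Prop :=
  (∀ u w : V, G.Adj u w → f u ≠ f w) ∧
  (∀ u : V, FOdd G f u ∨ FEven G f u) ∧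
  (∀ c : Fin n, Odd (Nat.card {u : V // f u = c ∧ FOdd G f u}))

/-- The graph obtained from `G` by identifying `u₁` and `u₂` into the single vertex `u₁`,
whose neighbourhood is the symmetric difference `N(u₁) Δ N(u₂)`. -/
def mergedGraph {V : Type*} (G : SimpleGraph V) (u₁ u₂ : V) :
    SimpleGraph {v : V // v ≠ u₂} where
  Adj a b := a ≠ b ∧
    ((a.val = u₁ ∧ Xor' (G.Adj u₁ b.val) (G.Adj u₂ b.val)) ∨
     (b.val = u₁ ∧ Xor' (G.Adj u₁ a.val) (G.Adj u₂ a.val)) ∨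
     (a.val ≠ u₁ ∧ b.val ≠ u₁ ∧ G.Adj a.val b.val))
  symm := ⟨by
    rintro a b ⟨hab, h⟩
    refine ⟨hab.symm, ?_⟩
    rcases h with ⟨h1, h2⟩ | ⟨h1, h2⟩ | ⟨h1, h2, h3⟩
    · exact Or.inr (Or.inl ⟨h1, h2⟩)
    · exact Or.inl ⟨h1, h2⟩
    · exact Or.inr (Or.inr ⟨h2, h1, h3.symm⟩)⟩
  loopless := ⟨fun a h => h.1 rfl⟩

/-- The `Ps`-merger of `u₁` and `u₂`: identify `u₁` and `u₂` into a single vertex whose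
neighbourhood is the symmetric difference of the two neighbourhoods, then delete all the
edges of the paths in `Ps`. -/
noncomputable def PMerger {V : Type*} (G : SimpleGraph V) {u₁ u₂ : V} (hne : u₁ ≠ u₂)
    (Ps : Set (G.Walk u₁ u₂)) : SimpleGraph {v : V // v ≠ u₂} :=
  letI := Classical.decEq V
  (mergedGraph G u₁ u₂).deleteEdges
    {e' : Sym2 {v : V // v ≠ u₂} |
      ∃ p ∈ Ps, ∃ e ∈ p.edges,
        Sym2.map (fun v : V =>
          if hv : v = u₂ then (⟨u₁, hne⟩ : {v : V // v ≠ u₂}) else ⟨v, hv⟩) e = e'}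

/-- A tree decomposition of `G`. -/
structure TreeDecomp {V : Type*} (G : SimpleGraph V) where
  X : Type
  T : SimpleGraph X
  isTree : T.IsTree
  bag : X → Finset V
  mem_bag : ∀ v : V, ∃ x : X, v ∈ bag x
  edge_bag : ∀ u v : V, G.Adj u v → ∃ x : X, u ∈ bag x ∧ v ∈ bag x
  bag_connected : ∀ v : V, (T.induce {x : X | v ∈ bag x}).Connected

/-- The treewidth of `G`: the least `w` such that `G` has a tree decomposition all of whose
bags have size at most `w + 1`. -/
noncomputable def treewidth {V : Type*} (G : SimpleGraph V) : ℕ :=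
  sInf {w : ℕ | ∃ D : TreeDecomp G, ∀ x, (D.bag x).card ≤ w + 1}

/-- The bipartite subgraph `G[C_i, C_j]` of `G` spanned by the edges with one endpoint
coloured `i` and the other coloured `j`. -/
def bipSub {V : Type*} {n : ℕ} (G : SimpleGraph V) (f : V → Fin n) (i j : Fin n) :
    SimpleGraph V where
  Adj a b := G.Adj a b ∧ ((f a = i ∧ f b = j) ∨ (f a = j ∧ f b = i))
  symm := ⟨by
    rintro a b ⟨h, h2⟩
    exact ⟨h.symm, h2.symm.imp (fun h => ⟨h.2, h.1⟩) (fun h => ⟨h.2, h.1⟩)⟩⟩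
  loopless := ⟨fun a h => G.irrefl h.1⟩

namespace OddTW

open Finset SimpleGraph.Walk

/-! ### Tree side components -/

variable {X : Type*}

/-- The set of vertices reachable from `x` after deleting the edge `xy`. -/
def Rside (T : SimpleGraph X) (x y : X) : Set X :=
  {z | (T.deleteEdges {s(x, y)}).Reachable x z}

lemma mem_rside_self (T : SimpleGraph X) (x y : X) : x ∈ Rside T x y :=
  SimpleGraph.Reachable.refl x

lemma rside_adj {T : SimpleGraph X} {x y z w : X} (h : z ∈ Rside T x y) (ha : T.Adj z w)
    (hne : s(z, w) ≠ s(x, y)) : w ∈ Rside T x y :=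
  SimpleGraph.Reachable.trans h
    (SimpleGraph.Adj.reachable (by rw [SimpleGraph.deleteEdges_adj]; exact ⟨ha, by simpa using hne⟩))

lemma rside_of_walk_avoid {T : SimpleGraph X} {x y a b : X} (p : T.Walk a b)
    (hp : s(x, y) ∉ p.edges) (ha : a ∈ Rside T x y) : b ∈ Rside T x y := by
  refine SimpleGraph.Reachable.trans ha ⟨p.toDeleteEdges _ ?_⟩
  intro e he hmem
  rw [Set.mem_singleton_iff] at hmem
  exact hp (hmem ▸ he)

lemma rside_dichotomy {T : SimpleGraph X} (hT : T.Connected) (x y z : X) :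
    z ∈ Rside T x y ∨ z ∈ Rside T y x := by
  have key : ∀ {a b : X} (_ : T.Walk a b),
      a ∈ Rside T x y ∨ a ∈ Rside T y x → b ∈ Rside T x y ∨ b ∈ Rside T y x := by
    intro a b p
    induction p with
    | nil => exact id
    | @cons a1 c1 b1 h q ih =>
      intro hstart
      apply ih
      by_cases he : s(a1, c1) = s(x, y)
      · rw [Sym2.eq_iff] at he
        rcases he with ⟨h1, h2⟩ | ⟨h1, h2⟩
        · exact Or.inr (by rw [h2]; exact mem_rside_self T y x)
        · exact Or.inl (by rw [h2]; exact mem_rside_self T x y)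
      · rcases hstart with hs | hs
        · exact Or.inl (rside_adj hs h he)
        · exact Or.inr (rside_adj hs h (fun hcon => he (hcon.trans Sym2.eq_swap)))
  obtain ⟨p⟩ := hT.preconnected x z
  exact key p (Or.inl (mem_rside_self T x y))

lemma rside_disjoint {T : SimpleGraph X} (hT : T.IsTree) {x y : X} (hxy : T.Adj x y) {z : X}
    (h1 : z ∈ Rside T x y) (h2 : z ∈ Rside T y x) : False := by
  have hb : T.IsBridge s(x, y) :=
    SimpleGraph.isAcyclic_iff_forall_edge_isBridge.mp hT.2 (T.mem_edgeSet.mpr hxy)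
  have h2' : (T.deleteEdges {s(x, y)}).Reachable y z := by
    have : s(y, x) = s(x, y) := Sym2.eq_swap
    rw [Rside, this] at h2
    exact h2
  exact (SimpleGraph.isBridge_iff.mp hb) (h1.trans h2'.symm)

lemma mem_edges_of_cross {T : SimpleGraph X} (hT : T.IsTree) {x y : X} (hxy : T.Adj x y)
    {z z' : X} (p : T.Walk z z') (hz : z ∈ Rside T x y) (hz' : z' ∈ Rside T y x) :
    s(x, y) ∈ p.edges := by
  by_contra h
  exact rside_disjoint hT hxy (rside_of_walk_avoid p h hz) hz'

/-- In a finite nonempty set of nodes of a tree with an "antisymmetric" orientation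
predicate, there is a sink. -/
lemma exists_sink {T : SimpleGraph X} (hT : T.IsTree) (Pt : X → X → Prop)
    (hanti : ∀ x y, T.Adj x y → Pt x y → Pt y x → False) (H : Finset X) (hH : H.Nonempty) :
    ∃ x ∈ H, ∀ y ∈ H, T.Adj x y → ¬ Pt x y := by
  classical
  induction H using Finset.strongInduction with
  | _ H ih =>
    obtain ⟨x₀, hx₀⟩ := hH
    by_cases hs : ∀ y ∈ H, T.Adj x₀ y → ¬ Pt x₀ y
    · exact ⟨x₀, hx₀, hs⟩
    push_neg at hs
    obtain ⟨y₀, hy₀, hadj, hPt⟩ := hs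
    set H' := H.filter (fun z => z ∈ Rside T y₀ x₀) with hH'
    have hy₀' : y₀ ∈ H' := by
      simp only [hH', Finset.mem_filter]
      exact ⟨hy₀, mem_rside_self T y₀ x₀⟩
    have hx₀' : x₀ ∉ H' := by
      simp only [hH', Finset.mem_filter, not_and]
      intro _ hmem
      exact rside_disjoint hT hadj.symm hmem (mem_rside_self T x₀ y₀)
    have hss : H' ⊂ H :=
      (Finset.ssubset_iff_of_subset (Finset.filter_subset _ _)).mpr ⟨x₀, hx₀, hx₀'⟩
    obtain ⟨x, hxH', hsink⟩ := ih H' hss ⟨y₀, hy₀'⟩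
    refine ⟨x, (Finset.filter_subset _ _) hxH', ?_⟩
    intro y hyH hxy hPtxy
    by_cases hyH' : y ∈ H'
    · exact hsink y hyH' hxy hPtxy
    · have hxR : x ∈ Rside T y₀ x₀ := (Finset.mem_filter.mp hxH').2
      have hyR : y ∉ Rside T y₀ x₀ := fun h => hyH' (Finset.mem_filter.mpr ⟨hyH, h⟩)
      by_cases he : s(x, y) = s(y₀, x₀)
      · rw [Sym2.eq_iff] at he
        rcases he with ⟨rfl, rfl⟩ | ⟨rfl, rfl⟩
        · exact hanti x y hadj.symm hPtxy hPt
        · exact rside_disjoint hT hadj.symm hxR (mem_rside_self T x y)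
      · exact hyR (rside_adj hxR hxy he)

/-! ### Tree decompositions: bag subtrees and separations -/

variable {V : Type} [Fintype V] {G : SimpleGraph V}

lemma bag_walk (D : TreeDecomp G) (v : V) {z z' : D.X} (hz : v ∈ D.bag z)
    (hz' : v ∈ D.bag z') :
    ∃ p : D.T.Walk z z', ∀ a ∈ p.support, v ∈ D.bag a := by
  obtain ⟨q⟩ := (D.bag_connected v).preconnected ⟨z, hz⟩ ⟨z', hz'⟩
  refine ⟨q.map ⟨Subtype.val, fun {a b} h => h⟩, ?_⟩
  intro a ha
  rw [SimpleGraph.Walk.support_map, List.mem_map] at ha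
  obtain ⟨⟨b, hb⟩, -, rfl⟩ := ha
  exact hb

/-- The set of vertices of `G` appearing in a bag on the `x`-side of the tree edge `xy`. -/
def Bset (D : TreeDecomp G) (x y : D.X) : Set V :=
  {v | ∃ z ∈ Rside D.T x y, v ∈ D.bag z}

lemma bset_cover (D : TreeDecomp G) (x y : D.X) (v : V) :
    v ∈ Bset D x y ∨ v ∈ Bset D y x := by
  obtain ⟨z, hz⟩ := D.mem_bag v
  rcases rside_dichotomy D.isTree.1 x y z with h | h
  · exact Or.inl ⟨z, h, hz⟩
  · exact Or.inr ⟨z, h, hz⟩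

lemma bset_inter (D : TreeDecomp G) {x y : D.X} (hxy : D.T.Adj x y) {v : V}
    (h1 : v ∈ Bset D x y) (h2 : v ∈ Bset D y x) : v ∈ D.bag x ∧ v ∈ D.bag y := by
  obtain ⟨z, hzR, hzv⟩ := h1
  obtain ⟨z', hzR', hzv'⟩ := h2
  obtain ⟨p, hp⟩ := bag_walk D v hzv hzv'
  have he := mem_edges_of_cross D.isTree hxy p hzR hzR'
  exact ⟨hp x (p.fst_mem_support_of_mem_edges he), hp y (p.snd_mem_support_of_mem_edges he)⟩

lemma bset_cross (D : TreeDecomp G) {x y : D.X} (hxy : D.T.Adj x y) {u w : V}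
    (ha : G.Adj u w) (hu : u ∈ Bset D x y) (hw : w ∈ Bset D y x) :
    (u ∈ D.bag x ∧ u ∈ D.bag y) ∨ (w ∈ D.bag x ∧ w ∈ D.bag y) := by
  obtain ⟨z, hz1, hz2⟩ := D.edge_bag u w ha
  rcases rside_dichotomy D.isTree.1 x y z with h | h
  · exact Or.inr (bset_inter D hxy ⟨z, h, hz2⟩ hw)
  · exact Or.inl (bset_inter D hxy hu ⟨z, h, hz1⟩)

/-! ### Parity counting -/

/-- Number of `f`-odd vertices of colour `i` in the set `P`. -/
noncomputable def cnt {t : ℕ} (G : SimpleGraph V) (f : V → Fin t) (i : Fin t) (P : Set V) : ℕ :=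
  Nat.card {v : V // f v = i ∧ FOdd G f v ∧ v ∈ P}

lemma nat_card_subtype (p : V → Prop) [DecidablePred p] :
    Nat.card {v : V // p v} = (Finset.univ.filter p).card := by
  rw [Nat.card_eq_fintype_card, Fintype.card_subtype]

lemma cnt_eq_card {t : ℕ} (G : SimpleGraph V) (f : V → Fin t) (i : Fin t) (P : Set V)
    [DecidablePred (fun v => f v = i ∧ FOdd G f v ∧ v ∈ P)] :
    cnt G f i P
      = (Finset.univ.filter (fun v => f v = i ∧ FOdd G f v ∧ v ∈ P)).card := by
  rw [cnt]
  exact nat_card_subtype _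

lemma cast_parity (n : ℕ) : (n : ZMod 2) = if Odd n then 1 else 0 := by
  rcases Nat.even_or_odd n with h | h
  · rw [if_neg (by simpa [Nat.not_odd_iff_even] using h)]
    rw [← ZMod.natCast_mod, Nat.even_iff.mp h]
    simp
  · rw [if_pos h, ← ZMod.natCast_mod, Nat.odd_iff.mp h]
    simp

lemma odd_iff_cast {n : ℕ} : Odd n ↔ (n : ZMod 2) = 1 := by
  rw [cast_parity]
  by_cases h : Odd n <;> simp [h]

lemma cnt_split {t : ℕ} (G : SimpleGraph V) (f : V → Fin t) {i : Fin t} {S A B : Set V}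
    (hSi : ∀ v ∈ S, f v ≠ i) (hcov : ∀ v, v ∈ A ∨ v ∈ B)
    (hint : ∀ v, v ∈ A → v ∈ B → v ∈ S) :
    cnt G f i (A \ S) + cnt G f i (B \ S) = Nat.card {u : V // f u = i ∧ FOdd G f u} := by
  classical
  rw [cnt_eq_card, cnt_eq_card, nat_card_subtype]
  have hdisj : Disjoint
      (Finset.univ.filter (fun v => f v = i ∧ FOdd G f v ∧ v ∈ A \ S))
      (Finset.univ.filter (fun v => f v = i ∧ FOdd G f v ∧ v ∈ B \ S)) := by
    rw [Finset.disjoint_left]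
    intro v hv1 hv2
    rw [Finset.mem_filter] at hv1 hv2
    exact hv2.2.2.2.2 (hint v hv1.2.2.2.1 hv2.2.2.2.1)
  have hunion : Finset.univ.filter (fun u => f u = i ∧ FOdd G f u)
      = (Finset.univ.filter (fun v => f v = i ∧ FOdd G f v ∧ v ∈ A \ S))
        ∪ (Finset.univ.filter (fun v => f v = i ∧ FOdd G f v ∧ v ∈ B \ S)) := by
    rw [← Finset.filter_or]
    apply Finset.filter_congr
    intro v _
    constructor
    · intro hv
      have hvS : v ∉ S := fun hmem => hSi v hmem hv.1
      rcases hcov v with hA | hB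
      · exact Or.inl ⟨hv.1, hv.2, hA, hvS⟩
      · exact Or.inr ⟨hv.1, hv.2, hB, hvS⟩
    · rintro (⟨h1, h2, -⟩ | ⟨h1, h2, -⟩) <;> exact ⟨h1, h2⟩
  rw [hunion, Finset.card_union_of_disjoint hdisj]

lemma cross_parity {t : ℕ} (G : SimpleGraph V) (f : V → Fin t)
    (hoe : ∀ u, FOdd G f u ∨ FEven G f u) {i j : Fin t} (hij : i ≠ j) {S A B : Set V}
    (hSi : ∀ v ∈ S, f v ≠ i) (hSj : ∀ v ∈ S, f v ≠ j) (hcov : ∀ v, v ∈ A ∨ v ∈ B)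
    (hint : ∀ v, v ∈ A → v ∈ B → v ∈ S)
    (hcross : ∀ u w, G.Adj u w → u ∈ A → w ∈ B → u ∈ S ∨ w ∈ S) :
    ((cnt G f i (A \ S) : ZMod 2)) = (cnt G f j (A \ S) : ZMod 2) := by
  classical
  -- the relevant vertex sets
  set Xf := Finset.univ.filter (fun v => f v = i ∧ v ∈ A ∧ v ∉ S) with hXf
  set Yf := Finset.univ.filter (fun v => f v = j ∧ v ∈ A ∧ v ∉ S) with hYf
  -- key step: for a vertex in one class, its neighbourhood count in the other
  have key : ∀ (c d : Fin t), c ≠ d → (∀ v ∈ S, f v ≠ c) → (∀ v ∈ S, f v ≠ d) →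
      ∀ u, f u = c → u ∈ A → u ∉ S →
      ((Finset.univ.filter (fun v => f v = d ∧ v ∈ A ∧ v ∉ S)).filter
          (fun w => G.Adj u w)).card % 2 = (if FOdd G f u then 1 else 0) := by
    intro c d hcd _hSc hSd u hu huA huS
    have hset : (Finset.univ.filter (fun v => f v = d ∧ v ∈ A ∧ v ∉ S)).filter
        (fun w => G.Adj u w) = Finset.univ.filter (fun w => G.Adj u w ∧ f w = d) := by
      ext w
      simp only [Finset.mem_filter, Finset.mem_univ, true_and]
      constructor
      · rintro ⟨⟨h1, -, -⟩, h2⟩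
        exact ⟨h2, h1⟩
      · rintro ⟨hadj, hfw⟩
        have hwS : w ∉ S := fun hw => hSd w hw hfw
        have hwA : w ∈ A := by
          rcases hcov w with hA | hB
          · exact hA
          · rcases hcross u w hadj huA hB with h | h
            · exact absurd h huS
            · exact absurd h hwS
        exact ⟨⟨hfw, hwA, hwS⟩, hadj⟩
    rw [hset]
    have hcnt : (Finset.univ.filter (fun w => G.Adj u w ∧ f w = d)).card
        = Nat.card {w : V // G.Adj u w ∧ f w = d} := (nat_card_subtype _).symm
    rw [hcnt]
    have hdne : d ≠ f u := by rw [hu]; exact hcd.symm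
    rcases hoe u with hodd | heven
    · rw [if_pos hodd, Nat.odd_iff.mp (hodd d hdne)]
    · have : ¬ FOdd G f u := by
        intro hodd
        have h1 := Nat.odd_iff.mp (hodd d hdne)
        have h2 := Nat.even_iff.mp (heven d hdne)
        omega
      rw [if_neg this, Nat.even_iff.mp (heven d hdne)]
  -- reformulate both sides as sums over Xf, Yf
  have hXcnt : (cnt G f i (A \ S) : ZMod 2) = ∑ u ∈ Xf, if FOdd G f u then (1 : ZMod 2) else 0 := by
    rw [Finset.sum_boole, cnt_eq_card]
    have hfe : Finset.univ.filter (fun v => f v = i ∧ FOdd G f v ∧ v ∈ A \ S)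
        = Xf.filter (fun v => FOdd G f v) := by
      ext v
      simp only [hXf, Finset.filter_filter, Finset.mem_filter, Finset.mem_univ, true_and,
        Set.mem_diff]
      tauto
    rw [hfe]
  have hYcnt : (cnt G f j (A \ S) : ZMod 2) = ∑ w ∈ Yf, if FOdd G f w then (1 : ZMod 2) else 0 := by
    rw [Finset.sum_boole, cnt_eq_card]
    have hfe : Finset.univ.filter (fun v => f v = j ∧ FOdd G f v ∧ v ∈ A \ S)
        = Yf.filter (fun v => FOdd G f v) := by
      ext v
      simp only [hYf, Finset.filter_filter, Finset.mem_filter, Finset.mem_univ, true_and,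
        Set.mem_diff]
      tauto
    rw [hfe]
  have hXsum : ∀ u ∈ Xf, (if FOdd G f u then (1 : ZMod 2) else 0)
      = ∑ w ∈ Yf, if G.Adj u w then (1 : ZMod 2) else 0 := by
    intro u hu
    simp only [hXf, Finset.mem_filter, Finset.mem_univ, true_and] at hu
    have hk := key i j hij hSi hSj u hu.1 hu.2.1 hu.2.2
    rw [← hYf] at hk
    rw [Finset.sum_boole, ← ZMod.natCast_mod, hk]
    by_cases hfo : FOdd G f u <;> simp [hfo]
  have hYsum : ∀ w ∈ Yf, (if FOdd G f w then (1 : ZMod 2) else 0)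
      = ∑ u ∈ Xf, if G.Adj w u then (1 : ZMod 2) else 0 := by
    intro w hw
    simp only [hYf, Finset.mem_filter, Finset.mem_univ, true_and] at hw
    have hk := key j i hij.symm hSj hSi w hw.1 hw.2.1 hw.2.2
    rw [← hXf] at hk
    rw [Finset.sum_boole, ← ZMod.natCast_mod, hk]
    by_cases hfo : FOdd G f w <;> simp [hfo]
  rw [hXcnt, hYcnt]
  rw [Finset.sum_congr rfl hXsum, Finset.sum_congr rfl hYsum]
  rw [Finset.sum_comm]
  apply Finset.sum_congr rfl
  intro w _
  apply Finset.sum_congr rfl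
  intro u _
  by_cases h : G.Adj u w
  · rw [if_pos h, if_pos h.symm]
  · rw [if_neg h, if_neg (fun h' => h h'.symm)]

/-! ### The orientation -/

/-- The separator associated to the tree edge `xy`. -/
def Sset (D : TreeDecomp G) (x y : D.X) : Set V := (↑(D.bag x) : Set V) ∩ ↑(D.bag y)

lemma sset_comm (D : TreeDecomp G) (x y : D.X) : Sset D x y = Sset D y x := by
  rw [Sset, Sset, Set.inter_comm]

lemma mem_sset {D : TreeDecomp G} {x y : D.X} {v : V} :
    v ∈ Sset D x y ↔ v ∈ D.bag x ∧ v ∈ D.bag y := Iff.rfl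

/-- The tree edge `xy` "points towards `y`": some colour missing from the separator has an
odd number of `f`-odd vertices strictly on the `y`-side. -/
def Pt {t : ℕ} (D : TreeDecomp G) (f : V → Fin t) (x y : D.X) : Prop :=
  ∃ i : Fin t, (∀ v ∈ Sset D x y, f v ≠ i) ∧ Odd (cnt G f i (Bset D y x \ Sset D x y))

lemma exists_missing {t : ℕ} (f : V → Fin t) (S' : Finset V) (h : S'.card < t) :
    ∃ i : Fin t, ∀ v ∈ S', f v ≠ i := by
  classical
  by_contra h'
  push_neg at h'
  have h1 : (Finset.univ : Finset (Fin t)).card ≤ (S'.image f).card := by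
    apply Finset.card_le_card
    intro i _
    obtain ⟨v, hv, hfv⟩ := h' i
    exact Finset.mem_image.mpr ⟨v, hv, hfv⟩
  have h2 : (S'.image f).card ≤ S'.card := Finset.card_image_le
  rw [Finset.card_univ, Fintype.card_fin] at h1
  omega

lemma pt_antisymm {t : ℕ} (D : TreeDecomp G) (f : V → Fin t) (hf : IsOddomorphism G t f)
    {x y : D.X} (hxy : D.T.Adj x y) : Pt D f x y → Pt D f y x → False := by
  rintro ⟨i, hi, hoddB⟩ ⟨j, hj, hoddA⟩
  rw [sset_comm D y x] at hj hoddA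
  have hcov : ∀ v, v ∈ Bset D x y ∨ v ∈ Bset D y x := bset_cover D x y
  have hint : ∀ v, v ∈ Bset D x y → v ∈ Bset D y x → v ∈ Sset D x y := by
    intro v h1 h2
    exact mem_sset.mpr (bset_inter D hxy h1 h2)
  have hsplit := cnt_split G f (i := i) (S := Sset D x y) (A := Bset D x y) (B := Bset D y x)
    hi hcov hint
  have htot : Odd (cnt G f i (Bset D x y \ Sset D x y) + cnt G f i (Bset D y x \ Sset D x y)) := by
    rw [hsplit]; exact hf.2.2 i
  have hoddAi : Odd (cnt G f i (Bset D x y \ Sset D x y)) := by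
    by_cases hij : i = j
    · subst hij; exact hoddA
    · have hcross : ∀ u w, G.Adj u w → u ∈ Bset D x y → w ∈ Bset D y x →
          u ∈ Sset D x y ∨ w ∈ Sset D x y := by
        intro u w ha hu hw
        rcases bset_cross D hxy ha hu hw with h | h
        · exact Or.inl (mem_sset.mpr h)
        · exact Or.inr (mem_sset.mpr h)
      have hpar := cross_parity G f hf.2.1 hij hi hj hcov hint hcross
      rw [odd_iff_cast, hpar, ← odd_iff_cast]
      exact hoddA
  rw [Nat.odd_add] at htot
  exact (Nat.not_odd_iff_even.mpr (htot.mp hoddAi)) hoddB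

/-! ### The trivial decomposition -/

def trivialDecomp (G : SimpleGraph V) : TreeDecomp G where
  X := Unit
  T := ⊥
  isTree := by
    constructor
    · constructor
      intro a b
      rw [Subsingleton.elim a b]
    · intro v c hc
      cases c with
      | nil => exact hc.ne_nil rfl
      | cons h q => exact h.elim
  bag := fun _ => Finset.univ
  mem_bag := fun v => ⟨(), Finset.mem_univ v⟩
  edge_bag := fun u v _ => ⟨(), Finset.mem_univ u, Finset.mem_univ v⟩
  bag_connected := by
    intro v
    rw [SimpleGraph.connected_iff]
    refine ⟨?_, ⟨⟨(), by simp⟩⟩⟩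
    intro a b
    have hab : a = b := Subtype.ext (Subsingleton.elim a.1 b.1)
    rw [hab]

/-! ### The main contradiction -/

lemma no_small {t : ℕ} (ht : 1 ≤ t) (f : V → Fin t) (hf : IsOddomorphism G t f)
    (D : TreeDecomp G) (hbag : ∀ x, (D.bag x).card ≤ t - 1) : False := by
  classical
  -- V is nonempty
  have hnonV : Nonempty V := by
    have h0 := hf.2.2 ⟨0, ht⟩
    have hne : Nat.card {u : V // f u = ⟨0, ht⟩ ∧ FOdd G f u} ≠ 0 := by
      obtain ⟨k, hk⟩ := h0; omega
    obtain ⟨⟨u, -⟩, -⟩ := Nat.card_ne_zero.mp hne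
    exact ⟨u⟩
  obtain ⟨v₀⟩ := hnonV
  choose n hn using D.mem_bag
  set r := n v₀ with hr
  let wp : ∀ v : V, D.T.Walk r (n v) := fun v =>
    Classical.choice (D.isTree.1.preconnected r (n v))
  set H : Finset D.X := Finset.univ.biUnion (fun v : V => (wp v).support.toFinset) with hH
  have hmemH : ∀ (v : V), ∀ a ∈ (wp v).support, a ∈ H := fun v a ha =>
    Finset.mem_biUnion.mpr ⟨v, Finset.mem_univ v, List.mem_toFinset.mpr ha⟩
  have hnH : ∀ v, n v ∈ H := fun v => hmemH v _ (SimpleGraph.Walk.end_mem_support _)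
  -- convexity of H
  have hconv : ∀ a ∈ H, ∀ b ∈ H, ∃ p : D.T.Walk a b, p.IsPath ∧ ∀ c ∈ p.support, c ∈ H := by
    intro a ha b hb
    obtain ⟨u, -, hu⟩ := Finset.mem_biUnion.mp ha
    obtain ⟨v, -, hv⟩ := Finset.mem_biUnion.mp hb
    rw [List.mem_toFinset] at hu hv
    set W := ((wp u).takeUntil a hu).reverse.append ((wp v).takeUntil b hv) with hW
    have hWsup : ∀ c ∈ W.support, c ∈ H := by
      intro c hc
      rw [hW, SimpleGraph.Walk.mem_support_append_iff] at hc
      rcases hc with hc | hc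
      · rw [SimpleGraph.Walk.support_reverse, List.mem_reverse] at hc
        exact hmemH u c (SimpleGraph.Walk.support_takeUntil_subset _ _ hc)
      · exact hmemH v c (SimpleGraph.Walk.support_takeUntil_subset _ _ hc)
    exact ⟨W.bypass, W.bypass_isPath, fun c hc => hWsup c (W.support_bypass_subset hc)⟩
  -- find a sink
  obtain ⟨x, hxH, hsink⟩ := exists_sink D.isTree (Pt D f)
    (fun a b hab h1 h2 => pt_antisymm D f hf hab h1 h2) H
    ⟨r, hmemH v₀ r (SimpleGraph.Walk.start_mem_support _)⟩
  -- a colour missing from the bag of the sink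
  obtain ⟨i, hi⟩ := exists_missing f (D.bag x) (lt_of_le_of_lt (hbag x) (by omega))
  -- the f-odd vertices of colour i
  set F : Finset V := Finset.univ.filter (fun v => f v = i ∧ FOdd G f v) with hF
  have hFodd : Odd F.card := by
    have := hf.2.2 i
    rwa [nat_card_subtype] at this
  set nbrs := H.filter (fun y => D.T.Adj x y) with hnbrs
  set part : D.X → Finset V :=
    fun y => Finset.univ.filter (fun v => f v = i ∧ FOdd G f v ∧ v ∈ Bset D y x) with hpart
  -- every f-odd vertex of colour i lies in some part
  have hcover : ∀ v ∈ F, ∃ y ∈ nbrs, v ∈ part y := by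
    intro v hv
    have hvni : f v = i ∧ FOdd G f v := by
      simpa [hF] using hv
    have hvx : v ∉ D.bag x := fun hmem => hi v hmem hvni.1
    have hxn : x ≠ n v := fun h => hvx (h ▸ hn v)
    obtain ⟨p, hpath, hsupH⟩ := hconv x hxH (n v) (hnH v)
    cases p with
    | nil => exact absurd rfl hxn
    | @cons _ c _ h q =>
      have hxq : x ∉ q.support := (SimpleGraph.Walk.cons_isPath_iff h q |>.mp hpath).2
      have hq' : ∀ e ∈ q.edges, e ∉ ({s(c, x)} : Set (Sym2 D.X)) := by
        intro e he hmem
        rw [Set.mem_singleton_iff] at hmem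
        subst hmem
        exact hxq (q.snd_mem_support_of_mem_edges he)
      have hreach : n v ∈ Rside D.T c x := ⟨q.toDeleteEdges _ hq'⟩
      have hcH : c ∈ H := hsupH c (by
        rw [SimpleGraph.Walk.support_cons]
        exact List.mem_cons_of_mem _ (SimpleGraph.Walk.start_mem_support q))
      refine ⟨c, Finset.mem_filter.mpr ⟨hcH, h⟩, ?_⟩
      simp only [hpart, Finset.mem_filter, Finset.mem_univ, true_and]
      exact ⟨hvni.1, hvni.2, ⟨n v, hreach, hn v⟩⟩
  -- the parts are pairwise disjoint
  have hdisj : ∀ y ∈ nbrs, ∀ y' ∈ nbrs, y ≠ y' → Disjoint (part y) (part y') := by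
    intro y hy y' hy' hne
    have hadj : D.T.Adj x y := (Finset.mem_filter.mp hy).2
    have hadj' : D.T.Adj x y' := (Finset.mem_filter.mp hy').2
    rw [Finset.disjoint_left]
    intro v hvy hvy'
    simp only [hpart, Finset.mem_filter, Finset.mem_univ, true_and] at hvy hvy'
    have hvx : v ∉ D.bag x := fun hmem => hi v hmem hvy.1
    obtain ⟨z, hzR, hzb⟩ := hvy.2.2
    obtain ⟨z', hzR', hzb'⟩ := hvy'.2.2
    obtain ⟨w, hwsup⟩ := bag_walk D v hzb hzb'
    have hxw : x ∉ w.support := fun hx => hvx (hwsup x hx)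
    have hwe : s(y, x) ∉ w.edges := fun he => hxw (w.snd_mem_support_of_mem_edges he)
    have hzz' : z' ∈ Rside D.T y x := rside_of_walk_avoid w hwe hzR
    have hy'R : y' ∈ Rside D.T x y := by
      refine rside_adj (mem_rside_self D.T x y) hadj' ?_
      intro hcon
      rw [Sym2.eq_iff] at hcon
      rcases hcon with ⟨-, h2⟩ | ⟨h1, -⟩
      · exact hne h2.symm
      · exact hadj.ne h1
    obtain ⟨w'⟩ := hzR'
    have hsubE : ∀ e ∈ w'.edges, e ∈ D.T.edgeSet := fun e he =>
      SimpleGraph.edgeSet_mono (SimpleGraph.deleteEdges_le _) (w'.edges_subset_edgeSet he)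
    set w'' := w'.transfer D.T hsubE with hw''
    by_cases hx'' : x ∈ w''.support
    · rw [hw'', SimpleGraph.Walk.support_transfer] at hx''
      have hreach : (D.T.deleteEdges {s(y', x)}).Reachable y' x := ⟨w'.takeUntil x hx''⟩
      have hb : D.T.IsBridge s(y', x) :=
        SimpleGraph.isAcyclic_iff_forall_edge_isBridge.mp D.isTree.2
          (D.T.mem_edgeSet.mpr hadj'.symm)
      exact (SimpleGraph.isBridge_iff.mp hb) hreach
    · have hxe : s(x, y) ∉ w''.edges := fun he => hx'' (w''.fst_mem_support_of_mem_edges he)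
      have hfin : z' ∈ Rside D.T x y := rside_of_walk_avoid w'' hxe hy'R
      exact rside_disjoint D.isTree hadj hfin hzz'
  -- F is the union of the parts
  have hFeq : F = nbrs.biUnion part := by
    ext v
    constructor
    · intro hv
      obtain ⟨y, hy, hvy⟩ := hcover v hv
      exact Finset.mem_biUnion.mpr ⟨y, hy, hvy⟩
    · intro hv
      obtain ⟨y, -, hvy⟩ := Finset.mem_biUnion.mp hv
      simp only [hpart, Finset.mem_filter, Finset.mem_univ, true_and] at hvy
      simp only [hF, Finset.mem_filter, Finset.mem_univ, true_and]
      exact ⟨hvy.1, hvy.2.1⟩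
  -- each part has even cardinality
  have heven : ∀ y ∈ nbrs, (part y).card % 2 = 0 := by
    intro y hy
    have hyH : y ∈ H := (Finset.mem_filter.mp hy).1
    have hadj : D.T.Adj x y := (Finset.mem_filter.mp hy).2
    have hnot := hsink y hyH hadj
    have hSi' : ∀ v ∈ Sset D x y, f v ≠ i := fun v hv => hi v (mem_sset.mp hv).1
    have hnodd : ¬ Odd (cnt G f i (Bset D y x \ Sset D x y)) := fun h => hnot ⟨i, hSi', h⟩
    rw [Nat.not_odd_iff_even, Nat.even_iff] at hnodd
    have hcard : (part y).card = cnt G f i (Bset D y x \ Sset D x y) := by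
      rw [cnt_eq_card]
      have hpy : part y = Finset.univ.filter
          (fun v => f v = i ∧ FOdd G f v ∧ v ∈ Bset D y x) := rfl
      rw [hpy]
      apply congrArg Finset.card
      apply Finset.filter_congr
      intro v _
      constructor
      · rintro ⟨h1, h2, h3⟩
        exact ⟨h1, h2, h3, fun hvS => hi v (mem_sset.mp hvS).1 h1⟩
      · rintro ⟨h1, h2, h3, -⟩
        exact ⟨h1, h2, h3⟩
    rw [hcard]
    exact hnodd
  -- contradiction: an odd number is a sum of even numbers
  rw [hFeq, Finset.card_biUnion hdisj] at hFodd
  rw [Nat.odd_iff, Finset.sum_nat_mod] at hFodd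
  rw [Finset.sum_congr rfl heven] at hFodd
  simp at hFodd

end OddTW

/-- If a finite simple graph `G` admits a `t`-oddomorphism, then the
treewidth of `G` is at least `t - 1`. -/
theorem treewidth_ge_of_oddomorphism {V : Type} [Fintype V] (G : SimpleGraph V)
    (t : ℕ) (ht : 1 ≤ t) (f : V → Fin t) (hf : IsOddomorphism G t f) :
    t - 1 ≤ treewidth G := by
  classical
  have hne : {w : ℕ | ∃ D : TreeDecomp G, ∀ x, (D.bag x).card ≤ w + 1}.Nonempty := by
    refine ⟨Fintype.card V, OddTW.trivialDecomp G, fun _ => ?_⟩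
    exact le_trans (Finset.card_le_univ _) (by simp)
  refine le_csInf hne ?_
  rintro w ⟨D, hD⟩
  by_contra hlt
  push_neg at hlt
  exact OddTW.no_small ht f hf D (fun x => (hD x).trans (by omega))
end

section
/- Let t be a positive integer, let G be a finite simple graph, let x and y be distinct vertices of G, and let P be a set of at least (t choose 2) pairwise edge-disjoint (x,y)-paths in G. Let G* be the graph obtained from G by identifying x and y into a single vertex whose neighbourhood is the symmetric difference N(x) Δ N(y), and then deleting all edges of the paths in P. If G* contains K_t as an immersion, then G contains K_t as an immersion. -/
open SimpleGraph

namespace ImmersionLift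

open SimpleGraph

variable {V : Type} {G : SimpleGraph V} {x y : V}

/-- The collapse map sending `y` to the merged vertex `x`. -/
noncomputable def coll (hne : x ≠ y) : V → {v : V // v ≠ y} := fun v =>
  letI := Classical.decEq V
  if hv : v = y then (⟨x, hne⟩ : {v : V // v ≠ y}) else ⟨v, hv⟩

lemma coll_apply_ne (hne : x ≠ y) {v : V} (hv : v ≠ y) : coll hne v = ⟨v, hv⟩ := by
  simp [coll, hv]

lemma coll_apply_y (hne : x ≠ y) : coll hne y = ⟨x, hne⟩ := by simp [coll]

lemma merged_adj_cases {a c : {v : V // v ≠ y}} (h : (mergedGraph G x y).Adj a c) :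
    G.Adj a.val c.val ∨ (a.val = x ∧ G.Adj y c.val) ∨ (c.val = x ∧ G.Adj a.val y) := by
  change a ≠ c ∧ _ at h
  obtain ⟨hac, h⟩ := h
  rcases h with ⟨h1, h2⟩ | ⟨h1, h2⟩ | ⟨h1, h2, h3⟩
  · rcases h2 with ⟨h2, -⟩ | ⟨h2, -⟩
    · exact Or.inl (h1 ▸ h2)
    · exact Or.inr (Or.inl ⟨h1, h2⟩)
  · rcases h2 with ⟨h2, -⟩ | ⟨h2, -⟩
    · exact Or.inl (h1 ▸ h2.symm)
    · exact Or.inr (Or.inr ⟨h1, h2.symm⟩)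
  · exact Or.inl h3

lemma adj_case2 {a c : {v : V // v ≠ y}} (h : (mergedGraph G x y).Adj a c)
    (h1 : ¬ G.Adj a.val c.val) (h2 : a.val = x) : G.Adj y c.val := by
  rcases merged_adj_cases h with h' | ⟨-, h'⟩ | ⟨h3, h4⟩
  · exact absurd h' h1
  · exact h'
  · exact absurd (Subtype.ext (h2.trans h3.symm)) h.ne

lemma adj_case3 {a c : {v : V // v ≠ y}} (h : (mergedGraph G x y).Adj a c)
    (h1 : ¬ G.Adj a.val c.val) (h2 : ¬ a.val = x) : c.val = x ∧ G.Adj a.val y := by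
  rcases merged_adj_cases h with h' | ⟨h3, -⟩ | h' 
  · exact absurd h' h1
  · exact absurd h3 h2
  · exact h'

/-- Lift a single merged-graph edge to a walk in `G`, using `pe` to travel between
`x` and `y` when needed. -/
noncomputable def liftSeg (hne : x ≠ y) (pe : G.Walk x y) {a c : {v : V // v ≠ y}}
    (h : (mergedGraph G x y).Adj a c) : G.Walk a.val c.val :=
  letI := Classical.dec
  if h1 : G.Adj a.val c.val then Walk.cons h1 Walk.nil
  else if h2 : a.val = x then
    (pe.copy h2.symm rfl).append (Walk.cons (adj_case2 h h1 h2) Walk.nil)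
  else
    Walk.cons (adj_case3 h h1 h2).2 (pe.reverse.copy rfl (adj_case3 h h1 h2).1.symm)

lemma liftSeg_edges (hne : x ≠ y) (pe : G.Walk x y) {a c : {v : V // v ≠ y}}
    (h : (mergedGraph G x y).Adj a c) :
    ∀ e ∈ (liftSeg hne pe h).edges, e ∈ pe.edges ∨ Sym2.map (coll hne) e = s(a, c) := by
  intro e he
  unfold liftSeg at he
  split_ifs at he with h1 h2
  · simp only [Walk.edges_cons, Walk.edges_nil, List.mem_singleton] at he
    subst he
    right
    rw [Sym2.map_pair_eq, coll_apply_ne hne a.2, coll_apply_ne hne c.2]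
  · rw [Walk.edges_append, List.mem_append, Walk.edges_copy] at he
    rcases he with he | he
    · exact Or.inl he
    · simp only [Walk.edges_cons, Walk.edges_nil, List.mem_singleton] at he
      subst he
      right
      rw [Sym2.map_pair_eq, coll_apply_y hne, coll_apply_ne hne c.2]
      have : a = ⟨x, hne⟩ := Subtype.ext h2
      rw [this]
  · simp only [Walk.edges_cons, Walk.edges_copy, Walk.edges_reverse,
      List.mem_cons, List.mem_reverse] at he
    rcases he with he | he
    · subst he
      right
      rw [Sym2.map_pair_eq, coll_apply_y hne, coll_apply_ne hne a.2]
      have : c = ⟨x, hne⟩ := Subtype.ext (adj_case3 h h1 h2).1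
      rw [this]
    · exact Or.inl he

variable {Ps : Set (G.Walk x y)}

lemma pmerger_adj {hne : x ≠ y} {a c : {v : V // v ≠ y}}
    (h : (PMerger G hne Ps).Adj a c) : (mergedGraph G x y).Adj a c := by
  rw [PMerger, SimpleGraph.deleteEdges_adj] at h
  exact h.1

/-- Lift a walk in the merger graph to a walk in `G` with projected endpoints. -/
noncomputable def liftWalk (hne : x ≠ y) (pe : G.Walk x y) :
    ∀ {a b : {v : V // v ≠ y}}, (PMerger G hne Ps).Walk a b → G.Walk a.val b.val
  | _, _, Walk.nil => Walk.nil
  | _, _, Walk.cons h p => (liftSeg hne pe (pmerger_adj h)).append (liftWalk hne pe p)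

lemma liftWalk_edges (hne : x ≠ y) (pe : G.Walk x y) :
    ∀ {a b : {v : V // v ≠ y}} (p : (PMerger G hne Ps).Walk a b),
      ∀ e ∈ (liftWalk hne pe p).edges, e ∈ pe.edges ∨ Sym2.map (coll hne) e ∈ p.edges
  | _, _, Walk.nil => by simp [liftWalk]
  | _, _, Walk.cons h p => by
    intro e he
    rw [liftWalk, Walk.edges_append, List.mem_append] at he
    rcases he with he | he
    · rcases liftSeg_edges hne pe (pmerger_adj h) e he with h' | h'
      · exact Or.inl h'
      · right
        rw [Walk.edges_cons, h']
        exact List.mem_cons_self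
    · rcases liftWalk_edges hne pe p e he with h' | h'
      · exact Or.inl h'
      · right
        rw [Walk.edges_cons]
        exact List.mem_cons_of_mem _ h'

lemma coll_lift_deleted (hne : x ≠ y) {pe : G.Walk x y} (hpe : pe ∈ Ps)
    {e : Sym2 V} (he : e ∈ pe.edges) :
    Sym2.map (coll hne) e ∉ (PMerger G hne Ps).edgeSet := by
  rw [PMerger, SimpleGraph.edgeSet_deleteEdges]
  rintro ⟨-, hd⟩
  exact hd ⟨pe, hpe, e, he, rfl⟩

end ImmersionLift

/-- If the graph obtained from `G` by identifying `x` and `y` (with the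
symmetric-difference neighbourhood) and deleting the edges of at least `(t choose 2)`
pairwise edge-disjoint `(x,y)`-paths contains `K_t` as an immersion, then so does `G`. -/
theorem containsImmersion_of_pMerger {V : Type} [Fintype V] (G : SimpleGraph V)
    (t : ℕ) (ht : 1 ≤ t) (x y : V) (hne : x ≠ y)
    (Ps : Set (G.Walk x y))
    (hpath : ∀ p ∈ Ps, p.IsPath)
    (hdisj : ∀ p ∈ Ps, ∀ q ∈ Ps, p ≠ q → ∀ e ∈ p.edges, e ∉ q.edges)
    (hcard : Nat.choose t 2 ≤ Ps.ncard)
    (himm : ContainsImmersion (PMerger G hne Ps) (completeGraph (Fin t))) :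
    ContainsImmersion G (completeGraph (Fin t)) := by
  classical
  obtain ⟨φ, P, hP, hD⟩ := himm
  obtain ⟨ι, hι⟩ : ∃ ι : {e : Sym2 (Fin t) // ¬ e.IsDiag} → Ps,
      Function.Injective fun s => (ι s : G.Walk x y) := by
    rcases isEmpty_or_nonempty {e : Sym2 (Fin t) // ¬ e.IsDiag} with hE | hE
    · exact ⟨fun s => isEmptyElim s, fun s => isEmptyElim s⟩
    · obtain ⟨S, hSsub, hScard⟩ := Set.exists_subset_card_eq hcard
      have hpos : 0 < Nat.choose t 2 := by
        rw [← Fintype.card_fin t, ← Sym2.card_subtype_not_diag]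
        exact Fintype.card_pos
      have hSfin : S.Finite := by
        by_contra hf
        rw [Set.Infinite.ncard (fun hh => hf hh)] at hScard
        omega
      haveI := hSfin.fintype
      have hcS : Fintype.card {e : Sym2 (Fin t) // ¬ e.IsDiag} = Fintype.card S := by
        rw [Sym2.card_subtype_not_diag, Fintype.card_fin,
          ← Nat.card_eq_fintype_card, Nat.card_coe_set_eq, hScard]
      let eqv := Fintype.equivOfCardEq hcS
      refine ⟨fun s => ⟨(eqv s).val, hSsub (eqv s).2⟩, fun s1 s2 hs => ?_⟩
      exact eqv.injective (Subtype.ext hs)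
  let φ' : Fin t ↪ V := ⟨fun i => (φ i).val, Subtype.val_injective.comp φ.injective⟩
  have hnd : ∀ {u v : Fin t}, (completeGraph (Fin t)).Adj u v →
      ¬ (s(u, v) : Sym2 (Fin t)).IsDiag := by
    intro u v h
    rw [Sym2.mk_isDiag_iff]
    exact h.ne
  let pe : ∀ u v : Fin t, (completeGraph (Fin t)).Adj u v → G.Walk x y :=
    fun u v h => (ι ⟨s(u, v), hnd h⟩ : G.Walk x y)
  have hpeps : ∀ u v h, pe u v h ∈ Ps := fun u v h => (ι ⟨s(u, v), hnd h⟩).2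
  let W : ∀ u v (h : (completeGraph (Fin t)).Adj u v), G.Walk (φ' u) (φ' v) :=
    fun u v h => ImmersionLift.liftWalk hne (pe u v h) (P u v h)
  refine ⟨φ', fun u v h => (W u v h).bypass, fun u v h => Walk.bypass_isPath _, ?_⟩
  intro u v h u' v' h' hsne e he he'
  have he1 := Walk.edges_bypass_subset _ he
  have he2 := Walk.edges_bypass_subset _ he'
  have hpedne : pe u v h ≠ pe u' v' h' := by
    intro hpe
    exact hsne (congrArg Subtype.val (hι hpe))
  rcases ImmersionLift.liftWalk_edges hne (pe u v h) (P u v h) e he1 with hA | hA <;>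
    rcases ImmersionLift.liftWalk_edges hne (pe u' v' h') (P u' v' h') e he2 with hB | hB
  · exact hdisj _ (hpeps u v h) _ (hpeps u' v' h') hpedne e hA hB
  · exact ImmersionLift.coll_lift_deleted hne (hpeps u v h) hA
      (Walk.edges_subset_edgeSet _ hB)
  · exact ImmersionLift.coll_lift_deleted hne (hpeps u' v' h') hB
      (Walk.edges_subset_edgeSet _ hA)
  · exact hD u v h u' v' h' hsne _ hA hB
end
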